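/- Let s ≥ 2 be an integer, let a be a real number with a > 0, and let n be an integer with n > ⌈a⌉. Then ex(n, gn_s ≥ a) = ex(n, gn_s ≥ ⌈a⌉); that is, the maximum number of edges over all n-vertex graphs G with gn(G,s) < a equals the maximum number of edges over all n-vertex graphs G with gn(G,s) < ⌈a⌉. -/

import Mathlib

open SimpleGraph

/-- A strategy for the guessing game on `G` with `s` colors: a family of guessing
functions, one per vertex, where each vertex's guess depends only on the colors
of the vertices in its (open) neighborhood. -/
def IsGuessingStrategy {V : Type*} (G : SimpleGraph V) (s : ℕ)
    (f : V → (V → Fin s) → Fin s) : Prop :=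
  ∀ (v : V) (c₁ c₂ : V → Fin s), (∀ u, G.Adj v u → c₁ u = c₂ u) → f v c₁ = f v c₂

/-- The maximum, over all strategies for the guessing game on `G` with `s` colors,
of the number of fixed points of the strategy (colorings where every vertex
guesses its own color correctly). -/
noncomputable def maxFixedPoints {V : Type*} (G : SimpleGraph V) (s : ℕ) : ℕ :=
  sSup {n : ℕ | ∃ f : V → (V → Fin s) → Fin s, IsGuessingStrategy G s f ∧
    n = Nat.card {c : V → Fin s // ∀ v, f v c = c v}}

/-- The guessing number of `G` with `s` colors: the logarithm base `s` of the
maximum number of fixed points of a strategy. -/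
noncomputable def guessingNumber {V : Type*} (G : SimpleGraph V) (s : ℕ) : ℝ :=
  Real.logb s (maxFixedPoints G s)

/-- The join `K_k ⊕ E_{n-k}`: the first `k` vertices form a clique and are joined
to all other vertices; the remaining `n - k` vertices form an independent set. -/
def cliqueJoinEmpty (n k : ℕ) : SimpleGraph (Fin n) :=
  SimpleGraph.fromRel (fun u _ => (u : ℕ) < k)

/-- The extremal number `ex(n, gn_s ≥ a)`: the maximum number of edges over all
graphs on `n` vertices whose guessing number with `s` colors is `< a`. -/
noncomputable def exGN (n s : ℕ) (a : ℝ) : ℕ :=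
  sSup {m : ℕ | ∃ G : SimpleGraph (Fin n),
    guessingNumber G s < a ∧ m = Nat.card G.edgeSet}

/-- `G` is `(gn_s ≥ a)`-saturated: `gn(G,s) < a` but adding any missing edge
raises the guessing number to at least `a`. -/
def GNSaturated {V : Type*} (G : SimpleGraph V) (s : ℕ) (a : ℝ) : Prop :=
  guessingNumber G s < a ∧
    ∀ u w : V, u ≠ w → ¬G.Adj u w →
      a ≤ guessingNumber (G ⊔ SimpleGraph.fromEdgeSet {s(u, w)}) s

/-- The saturation number `sat(n, gn_s ≥ a)`: the minimum number of edges over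
all `(gn_s ≥ a)`-saturated graphs on `n` vertices. -/
noncomputable def satGN (n s : ℕ) (a : ℝ) : ℕ :=
  sInf {m : ℕ | ∃ G : SimpleGraph (Fin n),
    GNSaturated G s a ∧ m = Nat.card G.edgeSet}

/-- The disjoint union `H + E_{n-h}` of a graph `H` on `h` vertices with `n - h`
isolated vertices, realized on `Fin n`. -/
def withIsolated {h : ℕ} (H : SimpleGraph (Fin h)) (n : ℕ) : SimpleGraph (Fin n) :=
  SimpleGraph.fromRel (fun u v =>
    ∃ (hu : (u : ℕ) < h) (hv : (v : ℕ) < h), H.Adj ⟨u, hu⟩ ⟨v, hv⟩)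

/-- `K*_{a,a}`: the complete bipartite graph `K_{a,a}` with one subdivided edge.
Vertices `0, …, a-1` are `x_1, …, x_a`; vertices `a, …, 2a-1` are `y_1, …, y_a`;
vertex `2a` is the subdivision vertex `v_0`, adjacent exactly to `x_1` and `y_1`.
The edge `x_1 y_1` is removed. -/
def Kstar (a : ℕ) : SimpleGraph (Fin (2 * a + 1)) :=
  SimpleGraph.fromRel (fun u v =>
    ((u : ℕ) < a ∧ a ≤ (v : ℕ) ∧ (v : ℕ) < 2 * a ∧ ¬((u : ℕ) = 0 ∧ (v : ℕ) = a)) ∨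
    ((u : ℕ) = 2 * a ∧ ((v : ℕ) = 0 ∨ (v : ℕ) = a)))

/-- Add `b` dominating vertices to a graph `H` on `m` vertices: the first `b`
vertices are adjacent to everything else (and each other), the remaining `m`
vertices induce a copy of `H`. -/
def withDominating {m : ℕ} (H : SimpleGraph (Fin m)) (b : ℕ) :
    SimpleGraph (Fin (b + m)) :=
  SimpleGraph.fromRel (fun u v =>
    (u : ℕ) < b ∨ (v : ℕ) < b ∨
      ∃ (hu : b ≤ (u : ℕ)) (hv : b ≤ (v : ℕ)),
        H.Adj ⟨(u : ℕ) - b, by have := u.isLt; omega⟩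
          ⟨(v : ℕ) - b, by have := v.isLt; omega⟩)

/-- `F` is a minimal graph with `gn_s ≥ a`: its guessing number with `s` colors
is at least `a`, but every proper subgraph has guessing number `< a`. -/
def MinimalGN {V : Type*} [Finite V] (F : SimpleGraph V) (s : ℕ) (a : ℝ) : Prop :=
  a ≤ guessingNumber F s ∧
    ∀ H : F.Subgraph, H ≠ ⊤ → guessingNumber H.coe s < a

/-! Write `⌈a⌉ = k + 1`, so `k < a ≤ k + 1`, and `ex(n, gn_s ≥ a) ≤ ex(n, gn_s ≥ k + 1)` is
monotonicity. Conversely, `K_k ⊕ E_{n-k}` has guessing number at most `k < a`: a fixed point is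
determined by its colours on the clique. If a vertex set `B` induces minimum degree `≥ k + 1`,
then the complement of `G[B]` has maximum degree `≤ |B| - k - 2`, so it is greedily
`(|B| - k - 1)`-colourable, i.e. `G[B]` is covered by `|B| - k - 1` cliques; asking every clique
to sum to `0` in `Fin s` yields `s ^ (k + 1)` fixed points. Hence a graph with `gn_s < k + 1` is
`k`-degenerate, so `2 e(G) + k (k + 1) ≤ 2 k n`, with equality for `K_k ⊕ E_{n-k}`. -/

open Finset

section GuessingGame

variable {V : Type*} {G : SimpleGraph V} {s : ℕ}

lemma card_fixedPoints_le_maxFixedPoints [Finite V] {f : V → (V → Fin s) → Fin s}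
    (hf : IsGuessingStrategy G s f) :
    Nat.card {c : V → Fin s // ∀ v, f v c = c v} ≤ maxFixedPoints G s :=
  le_csSup ⟨Nat.card (V → Fin s), by
    rintro m ⟨f, -, rfl⟩
    exact Nat.card_le_card_of_injective Subtype.val Subtype.val_injective⟩ ⟨f, hf, rfl⟩

lemma maxFixedPoints_le_of_forall {m : ℕ}
    (h : ∀ f, IsGuessingStrategy G s f → Nat.card {c : V → Fin s // ∀ v, f v c = c v} ≤ m) :
    maxFixedPoints G s ≤ m :=
  csSup_le' <| by rintro _ ⟨f, hf, rfl⟩; exact h f hf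

lemma maxFixedPoints_le_pow_card_of_forall_adj [Fintype V] (S : Finset V)
    (hS : ∀ v ∉ S, ∀ u, G.Adj v u → u ∈ S) : maxFixedPoints G s ≤ s ^ #S := by
  refine maxFixedPoints_le_of_forall fun f hf => ?_
  have hinj : Function.Injective
      fun (c : {c : V → Fin s // ∀ v, f v c = c v}) (u : S) => c.1 u := by
    rintro ⟨c₁, hc₁⟩ ⟨c₂, hc₂⟩ h
    refine Subtype.ext <| funext fun v => ?_
    by_cases hv : v ∈ S
    · exact congrFun h ⟨v, hv⟩
    · change c₁ v = c₂ v
      rw [← hc₁, ← hc₂]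
      exact hf v c₁ c₂ fun u hu => congrFun h ⟨u, hS v hv u hu⟩
  simpa [Nat.card_fun] using Nat.card_le_card_of_injective _ hinj

lemma maxFixedPoints_le_of_injective {W : Type*} [Finite V] [NeZero s] {H : SimpleGraph W}
    (φ : H →g G) (hφ : Function.Injective φ) : maxFixedPoints H s ≤ maxFixedPoints G s := by
  refine maxFixedPoints_le_of_forall fun f hf => ?_
  let g : V → (V → Fin s) → Fin s := Function.extend φ (fun w c => f w (c ∘ φ)) fun _ _ => 0
  have hg : IsGuessingStrategy G s g := by
    intro v c₁ c₂ h
    by_cases hv : ∃ w, φ w = v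
    · obtain ⟨w, rfl⟩ := hv
      simp only [g, hφ.extend_apply]
      exact hf w _ _ fun u hu => h _ (φ.map_adj hu)
    · simp only [g, Function.extend_apply' _ _ _ hv]
  have hfix : ∀ c : {c : W → Fin s // ∀ w, f w c = c w},
      ∀ v, g v (Function.extend φ c.1 0) = Function.extend φ c.1 0 v := by
    rintro ⟨c, hc⟩ v
    by_cases hv : ∃ w, φ w = v
    · obtain ⟨w, rfl⟩ := hv
      simp only [g, hφ.extend_apply, Function.comp_def]
      exact hc w
    · simp only [g, Function.extend_apply' _ _ _ hv, Pi.zero_apply]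
  refine (Nat.card_le_card_of_injective (fun c => ⟨_, hfix c⟩) fun c₁ c₂ h => ?_).trans
    (card_fixedPoints_le_maxFixedPoints hg)
  exact Subtype.ext <| funext fun w => by
    simpa [hφ.extend_apply] using congrFun (congrArg Subtype.val h) (φ w)

lemma guessingNumber_le_of_maxFixedPoints_le_pow (hs : 2 ≤ s) {k : ℕ}
    (h : maxFixedPoints G s ≤ s ^ k) : guessingNumber G s ≤ k := by
  have hs1 : (1 : ℝ) < s := by exact_mod_cast hs
  rcases (maxFixedPoints G s).eq_zero_or_pos with h0 | hpos
  · simp [guessingNumber, h0]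
  · calc guessingNumber G s ≤ Real.logb s ((s : ℝ) ^ k) :=
          Real.logb_le_logb_of_le hs1 (by exact_mod_cast hpos) (by exact_mod_cast h)
      _ = k := by rw [Real.logb_pow, Real.logb_self_eq_one hs1, mul_one]

lemma le_guessingNumber_of_pow_le_maxFixedPoints (hs : 2 ≤ s) {k : ℕ}
    (h : s ^ k ≤ maxFixedPoints G s) : (k : ℝ) ≤ guessingNumber G s := by
  have hs1 : (1 : ℝ) < s := by exact_mod_cast hs
  calc (k : ℝ) = Real.logb s ((s : ℝ) ^ k) := by
        rw [Real.logb_pow, Real.logb_self_eq_one hs1, mul_one]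
    _ ≤ guessingNumber G s :=
        Real.logb_le_logb_of_le hs1 (by positivity) (by exact_mod_cast h)

lemma pow_card_le_maxFixedPoints_mul_of_coloring_compl [Fintype V] [NeZero s]
    {ι : Type*} [Fintype ι] (C : Gᶜ.Coloring ι) :
    s ^ Fintype.card V ≤ maxFixedPoints G s * s ^ Fintype.card ι := by
  classical
  let classSum : (V → Fin s) →+ (ι → Fin s) :=
    AddMonoidHom.mk' (fun c i => ∑ v with C v = i, c v) fun c₁ c₂ => by
      ext i; simp [sum_add_distrib]
  have hclass : ∀ c v,
      classSum c (C v) = c v + ∑ u ∈ ({u | C u = C v} : Finset V).erase v, c u := fun c v =>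
    (add_sum_erase _ _ (by simp)).symm
  -- each colour class of `C` is a clique of `G`, and `v` guesses so that its class sums to `0`
  let f : V → (V → Fin s) → Fin s := fun v c => c v - classSum c (C v)
  have hf : IsGuessingStrategy G s f := by
    intro v c₁ c₂ h
    simp only [f, hclass, sub_add_cancel_left]
    refine congrArg _ (sum_congr rfl fun u hu => h u ?_)
    obtain ⟨huv, hu⟩ := mem_erase.1 hu
    by_contra hadj
    exact C.valid ((G.compl_adj _ _).2 ⟨huv.symm, hadj⟩) (mem_filter.1 hu).2.symm
  have hker : Nat.card classSum.ker ≤ Nat.card {c : V → Fin s // ∀ v, f v c = c v} :=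
    Nat.card_le_card_of_injective (fun c => ⟨c.1, fun v => by
      simp [f, (AddMonoidHom.mem_ker.1 c.2)]⟩)
      fun c₁ c₂ h => Subtype.ext (congrArg Subtype.val h :)
  calc s ^ Fintype.card V = Nat.card classSum.ker * Nat.card classSum.range := by
        rw [← AddSubgroup.index_ker, AddSubgroup.card_mul_index]; simp
    _ ≤ maxFixedPoints G s * s ^ Fintype.card ι := by
        gcongr
        · exact hker.trans (card_fixedPoints_le_maxFixedPoints hf)
        · calc Nat.card classSum.range ≤ Nat.card (ι → Fin s) :=
                Nat.card_le_card_of_injective _ Subtype.val_injective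
            _ = s ^ Fintype.card ι := by simp

lemma SimpleGraph.colorable_succ_of_forall_degree_le [Fintype V] [DecidableRel G.Adj] {d : ℕ}
    (h : ∀ v, G.degree v ≤ d) : G.Colorable (d + 1) := by
  classical
  suffices ∀ B : Finset V, ∃ col : V → Fin (d + 1), ∀ u ∈ B, ∀ v ∈ B, G.Adj u v → col u ≠ col v by
    obtain ⟨col, hcol⟩ := this univ
    exact ⟨SimpleGraph.Coloring.mk col fun huv => hcol _ (mem_univ _) _ (mem_univ _) huv⟩
  intro B
  induction B using Finset.induction_on with
  | empty => exact ⟨0, by simp⟩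
  | insert a B ha ih =>
    obtain ⟨col, hcol⟩ := ih
    obtain ⟨c, -, hc⟩ := exists_mem_notMem_of_card_lt_card
      (s := (G.neighborFinset a).image col) (t := univ)
      (by simpa using card_image_le.trans_lt (Nat.lt_succ_of_le (h a)))
    have hfresh : ∀ v, G.Adj a v → c ≠ col v := fun v hv hcv =>
      hc (hcv ▸ mem_image_of_mem col ((G.mem_neighborFinset a v).2 hv))
    refine ⟨Function.update col a c, fun u hu v hv huv => ?_⟩
    rcases mem_insert.1 hu with rfl | huB <;> rcases mem_insert.1 hv with rfl | hvB
    · exact absurd huv G.irrefl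
    · rw [Function.update_self, Function.update_of_ne (ne_of_mem_of_not_mem hvB ha)]
      exact hfresh v huv
    · rw [Function.update_self, Function.update_of_ne (ne_of_mem_of_not_mem huB ha)]
      exact (hfresh u huv.symm).symm
    · rw [Function.update_of_ne (ne_of_mem_of_not_mem huB ha),
        Function.update_of_ne (ne_of_mem_of_not_mem hvB ha)]
      exact hcol u huB v hvB huv

lemma pow_le_maxFixedPoints_of_forall_le_degree [Fintype V] [Nonempty V] [DecidableRel G.Adj]
    [NeZero s] {k : ℕ} (h : ∀ v, k ≤ G.degree v) : s ^ k ≤ maxFixedPoints G s := by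
  classical
  set N := Fintype.card V
  obtain ⟨v₀⟩ := ‹Nonempty V›
  have hkN : k < N := (h v₀).trans_lt (G.degree_lt_card_verts v₀)
  have hcompl : ∀ v, Gᶜ.degree v ≤ N - k - 1 := fun v => by
    rw [SimpleGraph.degree_compl]; have := h v; omega
  obtain ⟨C⟩ := SimpleGraph.colorable_succ_of_forall_degree_le hcompl
  have hcover : s ^ k * s ^ (N - k) ≤ maxFixedPoints G s * s ^ (N - k) := by
    rw [← pow_add, Nat.add_sub_cancel' hkN.le]
    simpa [Nat.sub_add_cancel (by omega : 1 ≤ N - k)] using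
      pow_card_le_maxFixedPoints_mul_of_coloring_compl (s := s) C
  exact Nat.le_of_mul_le_mul_right hcover (pow_pos (Nat.pos_of_neZero s) _)

lemma pow_le_maxFixedPoints_of_forall_le_card_adj [Fintype V] [DecidableRel G.Adj]
    [NeZero s] {k : ℕ} {B : Finset V} (hB : B.Nonempty) (h : ∀ v ∈ B, k ≤ #{u ∈ B | G.Adj v u}) :
    s ^ k ≤ maxFixedPoints G s := by
  have : Nonempty (B : Set V) := hB.to_subtype
  have hdeg : ∀ v : (B : Set V), (G.induce B).degree v = #{u ∈ B | G.Adj v u} := fun v => by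
    rw [← SimpleGraph.card_neighborFinset_eq_degree, ← card_map (Function.Embedding.subtype _)]
    congr 1
    ext u
    simp [and_comm]
  exact (pow_le_maxFixedPoints_of_forall_le_degree fun v => (hdeg v).symm ▸ h v v.2).trans
    (maxFixedPoints_le_of_injective (SimpleGraph.Embedding.induce (G := G) _).toHom
      (SimpleGraph.Embedding.induce (G := G) _).injective)

lemma exists_card_adj_le_of_guessingNumber_lt [Fintype V] [DecidableRel G.Adj]
    (hs : 2 ≤ s) {k : ℕ} (hG : guessingNumber G s < k + 1) {B : Finset V} (hB : B.Nonempty) :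
    ∃ v ∈ B, #{u ∈ B | G.Adj v u} ≤ k := by
  have : NeZero s := ⟨by omega⟩
  by_contra! h
  have := le_guessingNumber_of_pow_le_maxFixedPoints hs
    (pow_le_maxFixedPoints_of_forall_le_card_adj (k := k + 1) hB h)
  push_cast at this
  linarith

end GuessingGame

section Degeneracy

variable {V : Type*} {G : SimpleGraph V} [DecidableEq V] [DecidableRel G.Adj]

lemma sum_card_adj_eq_sum_card_adj_erase_add {B : Finset V} {x : V} (hx : x ∈ B) :
    ∑ v ∈ B, #{u ∈ B | G.Adj v u} =
      ∑ v ∈ B.erase x, #{u ∈ B.erase x | G.Adj v u} + 2 * #{u ∈ B | G.Adj x u} := by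
  have hdrop : ∀ v, #{u ∈ B | G.Adj v u} =
      #{u ∈ B.erase x | G.Adj v u} + if G.Adj v x then 1 else 0 := fun v => by
    rw [filter_erase]
    split_ifs with hvx
    · exact (card_erase_add_one (mem_filter.2 ⟨hx, hvx⟩)).symm
    · rw [erase_eq_of_notMem fun h => hvx (mem_filter.1 h).2, add_zero]
  have hback : #{v ∈ B.erase x | G.Adj v x} = #{u ∈ B | G.Adj x u} := by
    congr 1
    ext u
    simp only [mem_filter, mem_erase, G.adj_comm u x]
    exact ⟨fun h => ⟨h.1.2, h.2⟩, fun h => ⟨⟨G.ne_of_adj h.2 |>.symm, h.1⟩, h.2⟩⟩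
  rw [← add_sum_erase _ _ hx, sum_congr rfl fun v _ => hdrop v, sum_add_distrib, sum_boole,
    Nat.cast_id, hback]
  ring

lemma sum_card_adj_add_le_of_forall_exists_card_adj_le {k : ℕ}
    (hG : ∀ B : Finset V, B.Nonempty → ∃ v ∈ B, #{u ∈ B | G.Adj v u} ≤ k)
    {B : Finset V} (hB : k ≤ #B) :
    ∑ v ∈ B, #{u ∈ B | G.Adj v u} + k * (k + 1) ≤ 2 * k * #B := by
  induction B using Finset.strongInduction with
  | H B ih =>
    rcases hB.eq_or_lt with hkB | hkB
    · have hlt : ∀ v ∈ B, #{u ∈ B | G.Adj v u} + 1 ≤ k := fun v hv =>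
        hkB ▸ card_lt_card (filter_ssubset.2 ⟨v, hv, G.irrefl⟩)
      have := sum_le_sum hlt
      rw [sum_add_distrib, sum_const, sum_const, smul_eq_mul, smul_eq_mul, ← hkB] at this
      rw [← hkB]
      linarith
    · obtain ⟨x, hx, hdx⟩ := hG B (card_pos.1 (by omega))
      have hcard := card_erase_add_one hx
      have := ih (B.erase x) (erase_ssubset hx) (by omega)
      rw [sum_card_adj_eq_sum_card_adj_erase_add hx, ← hcard]
      linarith

end Degeneracy

lemma two_mul_card_edgeSet_add_le_of_guessingNumber_lt {V : Type*} [Fintype V]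
    {G : SimpleGraph V} {s k : ℕ} (hs : 2 ≤ s) (hk : k ≤ Fintype.card V)
    (hG : guessingNumber G s < k + 1) :
    2 * Nat.card G.edgeSet + k * (k + 1) ≤ 2 * k * Fintype.card V := by
  classical
  have := sum_card_adj_add_le_of_forall_exists_card_adj_le
    (fun _ hB => exists_card_adj_le_of_guessingNumber_lt hs hG hB) (B := univ) (by simpa)
  rw [Nat.card_eq_fintype_card, ← G.edgeFinset_card, ← G.sum_degrees_eq_twice_card_edges]
  simpa [← G.neighborFinset_eq_filter] using this

section CliqueJoinEmpty

variable {n k : ℕ}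

lemma maxFixedPoints_cliqueJoinEmpty_le (s : ℕ) (hk : k ≤ n) :
    maxFixedPoints (cliqueJoinEmpty n k) s ≤ s ^ k := by
  have := maxFixedPoints_le_pow_card_of_forall_adj (G := cliqueJoinEmpty n k) (s := s)
    {v : Fin n | (v : ℕ) < k} fun v hv u hu => by
      simp only [mem_filter, mem_univ, true_and] at hv ⊢
      simp only [cliqueJoinEmpty, SimpleGraph.fromRel_adj] at hu
      tauto
  rwa [Fin.card_filter_val_lt, min_eq_right hk] at this

lemma degree_cliqueJoinEmpty [DecidableRel (cliqueJoinEmpty n k).Adj] (v : Fin n) :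
    (cliqueJoinEmpty n k).degree v = if (v : ℕ) < k then n - 1 else min n k := by
  rw [← SimpleGraph.card_neighborFinset_eq_degree]
  split_ifs with hv
  · have : (cliqueJoinEmpty n k).neighborFinset v = univ.erase v := by
      ext u
      rw [SimpleGraph.mem_neighborFinset]
      simp [cliqueJoinEmpty, hv, eq_comm]
    rw [this, card_erase_of_mem (mem_univ _), card_univ, Fintype.card_fin]
  · have : (cliqueJoinEmpty n k).neighborFinset v = ({u | (u : ℕ) < k} : Finset (Fin n)) := by
      ext u
      rw [SimpleGraph.mem_neighborFinset]
      simp only [cliqueJoinEmpty, SimpleGraph.fromRel_adj, mem_filter, mem_univ, true_and]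
      exact ⟨fun h => h.2.resolve_left hv, fun h => ⟨fun e => hv (e ▸ h), Or.inr h⟩⟩
    rw [this, Fin.card_filter_val_lt]

lemma two_mul_card_edgeSet_cliqueJoinEmpty (hk : k ≤ n) :
    2 * Nat.card (cliqueJoinEmpty n k).edgeSet + k * (k + 1) = 2 * k * n := by
  classical
  have hcompl := card_filter_add_card_filter_not (s := univ) (fun v : Fin n => (v : ℕ) < k)
  rw [Fin.card_filter_val_lt, card_univ, Fintype.card_fin, min_eq_right hk] at hcompl
  rw [Nat.card_eq_fintype_card, ← SimpleGraph.edgeFinset_card,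
    ← SimpleGraph.sum_degrees_eq_twice_card_edges]
  simp only [degree_cliqueJoinEmpty, sum_ite, sum_const, smul_eq_mul, Fin.card_filter_val_lt,
    min_eq_right hk]
  obtain ⟨t, rfl⟩ := Nat.exists_eq_add_of_le hk
  rw [show #{v : Fin (k + t) | ¬(v : ℕ) < k} = t by omega]
  rcases k with _ | j
  · simp
  · rw [show j + 1 + t - 1 = j + t by omega]
    ring

end CliqueJoinEmpty

section ExtremalNumber

variable {n s : ℕ} {a : ℝ}

lemma card_edgeSet_le_exGN {G : SimpleGraph (Fin n)} (hG : guessingNumber G s < a) :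
    Nat.card G.edgeSet ≤ exGN n s a :=
  le_csSup ⟨Nat.card (Sym2 (Fin n)), by
    rintro _ ⟨G, -, rfl⟩
    exact Nat.card_le_card_of_injective _ Subtype.val_injective⟩ ⟨G, hG, rfl⟩

lemma exGN_le {m : ℕ}
    (h : ∀ G : SimpleGraph (Fin n), guessingNumber G s < a → Nat.card G.edgeSet ≤ m) :
    exGN n s a ≤ m :=
  csSup_le' <| by rintro _ ⟨G, hG, rfl⟩; exact h G hG

lemma exGN_mono {b : ℝ} (hab : a ≤ b) : exGN n s a ≤ exGN n s b :=
  exGN_le fun _ hG => card_edgeSet_le_exGN (hG.trans_le hab)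

end ExtremalNumber

/-- For `s ≥ 2`, `a > 0` and `n > ⌈a⌉`, the extremal number for guessing number
`a` equals the one for `⌈a⌉`: `ex(n, gn_s ≥ a) = ex(n, gn_s ≥ ⌈a⌉)`. -/
theorem exGN_eq_exGN_ceil (s : ℕ) (hs : 2 ≤ s) (a : ℝ) (ha : 0 < a) (n : ℕ)
    (hn : ⌈a⌉ < (n : ℤ)) :
    exGN n s a = exGN n s ((⌈a⌉ : ℤ) : ℝ) := by
  obtain ⟨k, hk⟩ : ∃ k : ℕ, ⌈a⌉ = k + 1 :=
    ⟨(⌈a⌉ - 1).toNat, by have := Int.ceil_pos.2 ha; omega⟩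
  have hka : (k : ℝ) < a := by
    have := Int.ceil_lt_add_one a
    rw [hk] at this
    push_cast at this
    linarith
  have hak : a ≤ k + 1 := by
    have := Int.le_ceil a
    rw [hk] at this
    exact_mod_cast this
  have hkn : k ≤ n := by omega
  have hK : guessingNumber (cliqueJoinEmpty n k) s < a :=
    (guessingNumber_le_of_maxFixedPoints_le_pow hs
      (maxFixedPoints_cliqueJoinEmpty_le s hkn)).trans_lt hka
  rw [hk]
  push_cast
  refine le_antisymm (exGN_mono hak) (exGN_le fun G hG => (card_edgeSet_le_exGN hK).trans' ?_)
  have hGedges := two_mul_card_edgeSet_add_le_of_guessingNumber_lt hs (by simpa using hkn) hG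
  have hKedges := two_mul_card_edgeSet_cliqueJoinEmpty (n := n) hkn
  rw [Fintype.card_fin] at hGedges
  omega
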